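/- arXiv:2001.09544 — 2 statements merged into one kernel-verified Lean document; each statement's English description precedes it below -/
import Mathlib

section
/- Let M* ∈ (0,1) and assume M^D ≤ M* and Σᵢ u^{k−1}_{i,K} ≤ M* for every cell K. If u^k : 𝒯 → 𝒪 solves one step of the implicit Euler finite-volume scheme with previous values u^{k−1}, then M^k_K = Σᵢ u^k_{i,K} ≤ M* for every cell K (discrete maximum principle for the total biomass). -/
open Real Set MeasureTheory

/-- `q(M) = (p(M)/M) ∫₀^M s^a / ((1-s)^b p(s)²) ds`. -/
noncomputable def qfun (p : ℝ → ℝ) (a b : ℝ) (M : ℝ) : ℝ :=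
  p M / M * ∫ s in (0:ℝ)..M, s ^ a / ((1 - s) ^ b * p s ^ 2)

/-- `vᵢ(u) = uᵢ q(M)/p(M)` with `M = Σⱼ uⱼ`, extended by `0` when `M = 0`. -/
noncomputable def vfun (p : ℝ → ℝ) (a b : ℝ) {n : ℕ} (u : Fin n → ℝ) (i : Fin n) : ℝ :=
  if (∑ j, u j) = 0 then 0
  else u i * qfun p a b (∑ j, u j) / p (∑ j, u j)

/-- Edge structure of a finite-volume graph: `Sum.inl K` is a Dirichlet edge at
cell `K`, `Sum.inr (K, L)` an interior edge joining `K` and `L`. -/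
abbrev EdgeEnds (T E : Type) := E → T ⊕ T × T

/-- `D_σ w = w_{K,σ} − w_K` for an edge `σ` (with the orientation of `ends`),
with exterior Dirichlet value `wD`. -/
noncomputable def edgeDiff {T E : Type} (ends : EdgeEnds T E) (w : T → ℝ) (wD : ℝ) (σ : E) : ℝ :=
  match ends σ with
  | Sum.inl K => wD - w K
  | Sum.inr KL => w KL.2 - w KL.1

/-- `D_{K,σ} w = w_{K,σ} − w_K` viewed from cell `K`, equal to `0` if `σ` is not
incident to `K`. -/
noncomputable def cellDiff {T E : Type} [DecidableEq T] (ends : EdgeEnds T E)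
    (w : T → ℝ) (wD : ℝ) (σ : E) (K : T) : ℝ :=
  match ends σ with
  | Sum.inl K' => if K' = K then wD - w K else 0
  | Sum.inr KL =>
      if KL.1 = K then w KL.2 - w K else if KL.2 = K then w KL.1 - w K else 0

/-- `(p_σ)² = (p(M_K)² + p(M_{K,σ})²)/2` on an edge `σ`, the exterior value on
Dirichlet edges being `M^D`. -/
noncomputable def pEdgeSq (p : ℝ → ℝ) {T E : Type} (ends : EdgeEnds T E)
    (Mf : T → ℝ) (MD : ℝ) (σ : E) : ℝ :=
  match ends σ with
  | Sum.inl K => (p (Mf K) ^ 2 + p MD ^ 2) / 2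
  | Sum.inr KL => (p (Mf KL.1) ^ 2 + p (Mf KL.2) ^ 2) / 2

/-- One step of the implicit Euler finite-volume scheme with unit diffusivities:
`ucur : 𝒯 → [0,∞)ⁿ` with `Σᵢ ucurᵢ < 1` on each cell, satisfying
`m(K)(u^k_{i,K} − u^{k−1}_{i,K})/Δt = Σ_σ τ_σ (p_σ^k)² D_{K,σ}(vᵢ(u^k))`. -/
def SchemeStep (p : ℝ → ℝ) (a b : ℝ) (n : ℕ) {T E : Type}
    [Fintype T] [Fintype E] [DecidableEq T] (ends : EdgeEnds T E)
    (m : T → ℝ) (τ : E → ℝ) (uD : Fin n → ℝ) (Δt : ℝ)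
    (uprev ucur : T → Fin n → ℝ) : Prop :=
  (∀ K i, 0 ≤ ucur K i) ∧ (∀ K, ∑ i, ucur K i < 1) ∧
  ∀ K i, m K * (ucur K i - uprev K i) / Δt =
    ∑ σ : E, τ σ * pEdgeSq p ends (fun L => ∑ j, ucur L j) (∑ j, uD j) σ *
      cellDiff ends (fun L => vfun p a b (ucur L) i) (vfun p a b uD i) σ K

/-- Entropy density `h(u)` (extended by continuity when some `uᵢ = 0`). -/
noncomputable def hent (p : ℝ → ℝ) (a b : ℝ) {n : ℕ} (u : Fin n → ℝ) : ℝ :=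
  (∑ i, (u i * (Real.log (u i) - 1) + 1)) +
    ∫ s in (0:ℝ)..(∑ i, u i), Real.log (qfun p a b s / p s)

/-- Relative entropy density `h*(u|u^D)`. -/
noncomputable def hstar (p : ℝ → ℝ) (a b : ℝ) {n : ℕ} (uD u : Fin n → ℝ) : ℝ :=
  hent p a b u - hent p a b uD -
    ∑ i, Real.log (uD i * qfun p a b (∑ j, uD j) / p (∑ j, uD j)) * (u i - uD i)

/-- Discrete relative entropy `H(u) = Σ_K m(K) h*(u_K|u^D)`. -/
noncomputable def Hent (p : ℝ → ℝ) (a b : ℝ) {n : ℕ} {T : Type} [Fintype T]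
    (m : T → ℝ) (uD : Fin n → ℝ) (u : T → Fin n → ℝ) : ℝ :=
  ∑ K, m K * hstar p a b uD (u K)

/-- Discrete entropy production `Iᵢ(u) = Σ_σ τ_σ p_σ² (D_σ √(vᵢ(u)))²`. -/
noncomputable def Iprod (p : ℝ → ℝ) (a b : ℝ) {n : ℕ} {T E : Type}
    [Fintype T] [Fintype E] (ends : EdgeEnds T E) (τ : E → ℝ)
    (uD : Fin n → ℝ) (u : T → Fin n → ℝ) (i : Fin n) : ℝ :=
  ∑ σ : E, τ σ * pEdgeSq p ends (fun L => ∑ j, u L j) (∑ j, uD j) σ *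
    (edgeDiff ends (fun L => Real.sqrt (vfun p a b (u L) i))
      (Real.sqrt (vfun p a b uD i)) σ) ^ 2

/-- `G(M) = ∫₀^M s^a/((1-s)^b p(s)²) ds`. -/
noncomputable def Gfun (p : ℝ → ℝ) (a b M : ℝ) : ℝ :=
  ∫ s in (0:ℝ)..M, s ^ a / ((1 - s) ^ b * p s ^ 2)

lemma sum_vfun (p : ℝ → ℝ) (a b : ℝ) {n : ℕ} (u : Fin n → ℝ)
    (hM0 : 0 < ∑ j, u j) (hp : p (∑ j, u j) ≠ 0) :
    ∑ i, vfun p a b u i = Gfun p a b (∑ j, u j) := by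
  simp only [vfun, hM0.ne', if_false]
  rw [← Finset.sum_div, ← Finset.sum_mul, qfun, Gfun]
  field_simp

lemma Gfun_integrand_contOn (p : ℝ → ℝ) (hpc : ContinuousOn p (Icc 0 1))
    (hppos : ∀ M ∈ Ico (0:ℝ) 1, 0 < p M) (a b : ℝ) (ha : 1 ≤ a)
    {y : ℝ} (hy : y < 1) :
    ContinuousOn (fun s : ℝ => s ^ a / ((1 - s) ^ b * p s ^ 2)) (Icc 0 y) := by
  apply ContinuousOn.div
  · intro s _
    exact (Real.continuousAt_rpow_const s a (Or.inr (by linarith))).continuousWithinAt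
  · apply ContinuousOn.mul
    · intro s hs
      have h1 : (1 : ℝ) - s ≠ 0 := by have := hs.2; intro h; nlinarith [hs.1]
      exact ((continuousAt_const.sub continuousAt_id).rpow_const
        (Or.inl h1)).continuousWithinAt
    · exact ((hpc.mono (Icc_subset_Icc le_rfl (by linarith))).pow 2)
  · intro s hs
    have h1 : (0 : ℝ) < 1 - s := by have := hs.2; linarith
    have h2 : 0 < p s := hppos s ⟨hs.1, by linarith [hs.2]⟩
    have h3 : (0 : ℝ) < (1 - s) ^ b := Real.rpow_pos_of_pos h1 b
    positivity

lemma Gfun_mono (p : ℝ → ℝ) (hpc : ContinuousOn p (Icc 0 1))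
    (hppos : ∀ M ∈ Ico (0:ℝ) 1, 0 < p M) (a b : ℝ) (ha : 1 ≤ a)
    {x y : ℝ} (hx : 0 ≤ x) (hxy : x ≤ y) (hy : y < 1) :
    Gfun p a b x ≤ Gfun p a b y := by
  set f : ℝ → ℝ := fun s => s ^ a / ((1 - s) ^ b * p s ^ 2) with hf
  have hcont : ContinuousOn f (Icc 0 y) := Gfun_integrand_contOn p hpc hppos a b ha hy
  have hint1 : IntervalIntegrable f MeasureTheory.volume 0 x := by
    apply (hcont.mono ?_).intervalIntegrable
    rw [uIcc_of_le hx]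
    exact Icc_subset_Icc le_rfl hxy
  have hint2 : IntervalIntegrable f MeasureTheory.volume x y := by
    apply (hcont.mono ?_).intervalIntegrable
    rw [uIcc_of_le hxy]
    exact Icc_subset_Icc hx le_rfl
  have hadd := intervalIntegral.integral_add_adjacent_intervals hint1 hint2
  have hnn : 0 ≤ ∫ s in x..y, f s := by
    apply intervalIntegral.integral_nonneg hxy
    intro s hs
    have hs0 : 0 ≤ s := le_trans hx hs.1
    have hs1 : 0 ≤ 1 - s := by have := le_trans hs.2 hy.le; linarith
    exact div_nonneg (Real.rpow_nonneg hs0 a)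
      (mul_nonneg (Real.rpow_nonneg hs1 b) (sq_nonneg _))
  have : Gfun p a b y = Gfun p a b x + ∫ s in x..y, f s := by
    rw [Gfun, Gfun, ← hadd]
  linarith

lemma cellDiff_sum {T E : Type} [DecidableEq T] (ends : EdgeEnds T E) {n : ℕ}
    (w : T → Fin n → ℝ) (wD : Fin n → ℝ) (σ : E) (K : T) :
    ∑ i, cellDiff ends (fun L => w L i) (wD i) σ K
      = cellDiff ends (fun L => ∑ i, w L i) (∑ i, wD i) σ K := by
  cases h : ends σ with
  | inl K' =>
    simp only [cellDiff, h]
    split_ifs <;> simp [Finset.sum_sub_distrib]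
  | inr KL =>
    simp only [cellDiff, h]
    split_ifs <;> simp [Finset.sum_sub_distrib]

lemma pEdgeSq_nonneg (p : ℝ → ℝ) {T E : Type} (ends : EdgeEnds T E)
    (Mf : T → ℝ) (MD : ℝ) (σ : E) : 0 ≤ pEdgeSq p ends Mf MD σ := by
  cases h : ends σ with
  | inl K => simp only [pEdgeSq, h]; positivity
  | inr KL => simp only [pEdgeSq, h]; positivity

/-- Discrete maximum principle for the total biomass: if `M* ∈ (0,1)`,
`M^D ≤ M*`, `Σᵢ u^{k−1}_{i,K} ≤ M*` for every cell, and `u^k : 𝒯 → 𝒪` solves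
one step of the scheme, then `Σᵢ u^k_{i,K} ≤ M*` for every cell. -/
theorem scheme_maximum_principle (n : ℕ) (hn : 1 ≤ n) (a b : ℝ)
    (ha : 1 ≤ a) (hb : 1 ≤ b)
    (p : ℝ → ℝ) (hpc : ContinuousOn p (Icc 0 1))
    (hpa : AntitoneOn p (Icc 0 1)) (hp1 : p 1 = 0)
    (hppos : ∀ M ∈ Ico (0:ℝ) 1, 0 < p M)
    (T E : Type) [Fintype T] [Fintype E] [DecidableEq T]
    (ends : EdgeEnds T E)
    (hends : ∀ σ K L, ends σ = Sum.inr (K, L) → K ≠ L)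
    (m : T → ℝ) (hm : ∀ K, 0 < m K) (τ : E → ℝ) (hτ : ∀ σ, 0 < τ σ)
    (uD : Fin n → ℝ) (huD : ∀ i, 0 < uD i) (hMD : ∑ i, uD i < 1)
    (Δt : ℝ) (hΔt : 0 < Δt)
    (Mstar : ℝ) (hMstar : Mstar ∈ Ioo (0:ℝ) 1)
    (hMDstar : ∑ i, uD i ≤ Mstar)
    (uprev : T → Fin n → ℝ) (huprev : ∀ K i, 0 ≤ uprev K i)
    (huprevM : ∀ K, ∑ i, uprev K i ≤ Mstar)
    (ucur : T → Fin n → ℝ) (hucur_pos : ∀ K i, 0 < ucur K i)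
    (hstep : SchemeStep p a b n ends m τ uD Δt uprev ucur) :
    ∀ K, ∑ i, ucur K i ≤ Mstar := by
  obtain ⟨hpos, hlt1, heq⟩ := hstep
  set Mf : T → ℝ := fun L => ∑ i, ucur L i with hMfdef
  intro K
  obtain ⟨K0, -, hmax⟩ := Finset.exists_max_image (Finset.univ : Finset T) Mf
    ⟨K, Finset.mem_univ K⟩
  have hmax' : ∀ L, Mf L ≤ Mf K0 := fun L => hmax L (Finset.mem_univ L)
  have hgoal : Mf K0 ≤ Mstar := by
    by_contra hcon
    push_neg at hcon
    have hMK0lt1 : Mf K0 < 1 := hlt1 K0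
    have hn' : (Finset.univ : Finset (Fin n)).Nonempty := ⟨⟨0, hn⟩, Finset.mem_univ _⟩
    have hMpos : ∀ L, 0 < Mf L := fun L => Finset.sum_pos (fun i _ => hucur_pos L i) hn'
    have hMDpos : 0 < ∑ i, uD i := Finset.sum_pos (fun i _ => huD i) hn'
    have hpne : ∀ L, p (Mf L) ≠ 0 := fun L => (hppos _ ⟨(hMpos L).le, hlt1 L⟩).ne'
    have hpDne : p (∑ i, uD i) ≠ 0 := (hppos _ ⟨hMDpos.le, hMD⟩).ne'
    -- sum the scheme equation over i at K0
    have hsum : ∑ i, m K0 * (ucur K0 i - uprev K0 i) / Δt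
        = ∑ i, ∑ σ : E, τ σ * pEdgeSq p ends Mf (∑ j, uD j) σ *
            cellDiff ends (fun L => vfun p a b (ucur L) i) (vfun p a b uD i) σ K0 :=
      Finset.sum_congr rfl fun i _ => heq K0 i
    have hL : ∑ i, m K0 * (ucur K0 i - uprev K0 i) / Δt
        = m K0 * (Mf K0 - ∑ i, uprev K0 i) / Δt := by
      rw [← Finset.sum_div, ← Finset.mul_sum, Finset.sum_sub_distrib]
    have hfun : (fun L => ∑ i, vfun p a b (ucur L) i)
        = fun L => Gfun p a b (Mf L) :=
      funext fun L => sum_vfun p a b (ucur L) (hMpos L) (hpne L)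
    have hfunD : ∑ i, vfun p a b uD i = Gfun p a b (∑ j, uD j) :=
      sum_vfun p a b uD hMDpos hpDne
    have hR : ∑ i, ∑ σ : E, τ σ * pEdgeSq p ends Mf (∑ j, uD j) σ *
            cellDiff ends (fun L => vfun p a b (ucur L) i) (vfun p a b uD i) σ K0
        = ∑ σ : E, τ σ * pEdgeSq p ends Mf (∑ j, uD j) σ *
            cellDiff ends (fun L => Gfun p a b (Mf L)) (Gfun p a b (∑ j, uD j)) σ K0 := by
      rw [Finset.sum_comm]
      refine Finset.sum_congr rfl fun σ _ => ?_
      rw [← Finset.mul_sum, cellDiff_sum ends (fun L i => vfun p a b (ucur L) i)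
        (fun i => vfun p a b uD i) σ K0, hfunD]
      rw [show (fun L => ∑ i, vfun p a b (ucur L) i) = fun L => Gfun p a b (Mf L) from hfun]
    have hmono : ∀ z, 0 ≤ z → z ≤ Mf K0 → Gfun p a b z ≤ Gfun p a b (Mf K0) :=
      fun z hz0 hz1 => Gfun_mono p hpc hppos a b ha hz0 hz1 hMK0lt1
    have hterm : ∀ σ : E, τ σ * pEdgeSq p ends Mf (∑ j, uD j) σ *
        cellDiff ends (fun L => Gfun p a b (Mf L)) (Gfun p a b (∑ j, uD j)) σ K0 ≤ 0 := by
      intro σ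
      have hcd : cellDiff ends (fun L => Gfun p a b (Mf L))
          (Gfun p a b (∑ j, uD j)) σ K0 ≤ 0 := by
        cases h : ends σ with
        | inl K' =>
          simp only [cellDiff, h]
          split_ifs with h1
          · have := hmono (∑ j, uD j) hMDpos.le (by linarith)
            subst h1; linarith
          · exact le_rfl
        | inr KL =>
          simp only [cellDiff, h]
          split_ifs with h1 h2
          · have := hmono (Mf KL.2) (hMpos KL.2).le (hmax' KL.2)
            subst h1; linarith
          · have := hmono (Mf KL.1) (hMpos KL.1).le (hmax' KL.1)
            subst h2; linarith
          · exact le_rfl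
      have hcnn : 0 ≤ τ σ * pEdgeSq p ends Mf (∑ j, uD j) σ :=
        mul_nonneg (hτ σ).le (pEdgeSq_nonneg p ends Mf (∑ j, uD j) σ)
      exact mul_nonpos_of_nonneg_of_nonpos hcnn hcd
    have hRle : ∑ σ : E, τ σ * pEdgeSq p ends Mf (∑ j, uD j) σ *
        cellDiff ends (fun L => Gfun p a b (Mf L)) (Gfun p a b (∑ j, uD j)) σ K0 ≤ 0 :=
      Finset.sum_nonpos fun σ _ => hterm σ
    have hLpos : 0 < m K0 * (Mf K0 - ∑ i, uprev K0 i) / Δt := by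
      have := huprevM K0
      apply div_pos (mul_pos (hm K0) (by linarith)) hΔt
    rw [hL, hR] at hsum
    linarith
  exact le_trans (hmax' K) hgoal
end

section
/- Let M* ∈ (0,1) with M^D ≤ M*, let N ≥ 1 be an integer, and let u⁰, u¹, …, u^N : 𝒯 → [0,∞)ⁿ be such that for each k = 1,…,N the function u^k solves one step of the implicit Euler finite-volume scheme with previous values u^{k−1}, such that M^k_K = Σᵢ u^k_{i,K} ≤ M* for all K and all 0 ≤ k ≤ N, and such that the entropy inequality H(u^k) + Δt · Σᵢ₌₁ⁿ Iᵢ(u^k) ≤ H(u^{k−1}) holds for each k = 1,…,N. Then for every i = 1,…,n: Σ_{k=1}^N Δt · Σ_{σ∈ℰ} τ_σ (D_σ vᵢ(u^k))² ≤ 4 q(M*) H(u⁰) / p(M*)³ (discrete gradient estimate). -/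
open Real Set MeasureTheory

/-!
With `V = q(M*)/p(M*)`, every `vᵢ(uᵏ_K)` and `vᵢ(u^D)` lies in `[0, V]`, because
`q(s)/p(s) = s⁻¹ ∫₀ˢ f` is the running average of the increasing function
`f(s) = s^a/((1-s)^b p(s)²)`, hence increasing; and `p_σ² ≥ p(M*)²` since `p` is
nonincreasing. On `[0, V]` one has `(A - B)² = (√A + √B)²(√A - √B)² ≤ 4V(√A - √B)²`, so
`Σ_σ τ_σ (D_σ vᵢ)² ≤ 4V/p(M*)² · Iᵢ`. Summing the entropy inequalities telescopes to
`Δt Σₖ Σᵢ Iᵢ(uᵏ) ≤ H(u⁰) - H(u^N) ≤ H(u⁰)`.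

Nonnegativity of `H` is convexity of `h`: `h*(u|u^D)` is the sum of the tangent-line gaps of
`x log x` in each species and of `M ↦ ∫₀^M log(q/p)` at `M^D`, and the latter gap is
nonnegative because its integrand is increasing. This integral is finite since
`log(q(s)/p(s)) ≥ a log s - log((a+1) p(0)²)`.
-/

lemma mul_log_sub_one_add_log_mul_sub_le {x y : ℝ} (hx : 0 ≤ x) (hy : 0 < y) :
    y * (log y - 1) + log y * (x - y) ≤ x * (log x - 1) := by
  rcases hx.eq_or_lt with rfl | hx
  · simp only [log_zero]; linarith
  · have h := log_le_sub_one_of_pos (div_pos hy hx)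
    rw [log_div hy.ne' hx.ne'] at h
    have := mul_le_mul_of_nonneg_left h hx.le
    rw [mul_sub, mul_sub, mul_div_cancel₀ _ hx.ne', mul_one] at this
    linarith

lemma sq_sub_le_four_mul_sq_sqrt_sub {A B V : ℝ} (hA : 0 ≤ A) (hB : 0 ≤ B) (hAV : A ≤ V)
    (hBV : B ≤ V) : (A - B) ^ 2 ≤ 4 * V * (√A - √B) ^ 2 := by
  have hsum : (√A + √B) ^ 2 ≤ 4 * V := by
    nlinarith [sq_sqrt hA, sq_sqrt hB, sq_nonneg (√A - √B)]
  calc (A - B) ^ 2 = (√A ^ 2 - √B ^ 2) ^ 2 := by rw [sq_sqrt hA, sq_sqrt hB]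
    _ = (√A + √B) ^ 2 * (√A - √B) ^ 2 := by ring
    _ ≤ 4 * V * (√A - √B) ^ 2 := mul_le_mul_of_nonneg_right hsum (sq_nonneg _)

lemma MonotoneOn.mul_sub_le_intervalIntegral {φ : ℝ → ℝ} {s : Set ℝ} {x y : ℝ}
    (hφ : MonotoneOn φ s) (hx : x ∈ s) (hxy : uIoo x y ⊆ s)
    (hint : IntervalIntegrable φ volume x y) : φ x * (y - x) ≤ ∫ t in x..y, φ t := by
  rcases le_total x y with hle | hle
  · have := intervalIntegral.integral_mono_on_of_le_Ioo hle intervalIntegrable_const hint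
      fun t ht => hφ hx (hxy (by rwa [uIoo_of_le hle])) ht.1.le
    simpa [mul_comm] using this
  · have := intervalIntegral.integral_mono_on_of_le_Ioo hle hint.symm intervalIntegrable_const
      fun t ht => hφ (hxy (by rwa [uIoo_of_ge hle])) hx ht.2.le
    rw [intervalIntegral.integral_symm]
    simp only [intervalIntegral.integral_const, smul_eq_mul] at this
    linarith

lemma MonotoneOn.integrableOn_Ioc_of_le {φ g : ℝ → ℝ} {x y : ℝ} (hφ : MonotoneOn φ (Ioc x y))
    (hg : IntegrableOn g (Ioc x y)) (hgφ : ∀ t ∈ Ioc x y, g t ≤ φ t) :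
    IntegrableOn φ (Ioc x y) := by
  rcases lt_or_ge x y with hxy | hxy
  · have hy : y ∈ Ioc x y := right_mem_Ioc.2 hxy
    refine Integrable.mono' (g := fun t => |φ y| + |g t|)
      ((integrableOn_const measure_Ioc_lt_top.ne).add hg.abs)
      (aemeasurable_restrict_of_monotoneOn measurableSet_Ioc hφ).aestronglyMeasurable
      ((ae_restrict_iff' measurableSet_Ioc).2 (Filter.Eventually.of_forall fun t ht => ?_))
    rw [Real.norm_eq_abs, abs_le]
    have := hφ ht hy ht.2
    constructor <;> linarith [hgφ t ht, le_abs_self (φ y), neg_abs_le (g t), abs_nonneg (φ y),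
      abs_nonneg (g t)]
  · rw [Ioc_eq_empty hxy.not_gt]
    exact integrableOn_empty

lemma sum_Icc_le_sub_of_add_le {x d : ℕ → ℝ} {N : ℕ}
    (h : ∀ k ∈ Finset.Icc 1 N, x k + d k ≤ x (k - 1)) :
    ∑ k ∈ Finset.Icc 1 N, d k ≤ x 0 - x N := by
  induction N with
  | zero => simp
  | succ N ih =>
    rw [Finset.sum_Icc_succ_top (by omega)]
    have hlast := h (N + 1) (by simp)
    have hprev := ih fun k hk => h k (Finset.Icc_subset_Icc_right N.le_succ hk)
    simp only [add_tsub_cancel_right] at hlast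
    linarith

noncomputable def qIntegrand (p : ℝ → ℝ) (a b s : ℝ) : ℝ :=
  s ^ a / ((1 - s) ^ b * p s ^ 2)

noncomputable def qPrimitive (p : ℝ → ℝ) (a b M : ℝ) : ℝ :=
  ∫ s in (0:ℝ)..M, qIntegrand p a b s

lemma qfun_eq (p : ℝ → ℝ) (a b M : ℝ) : qfun p a b M = p M / M * qPrimitive p a b M := rfl

lemma qfun_div_eq {p : ℝ → ℝ} {a b s : ℝ} (hp : p s ≠ 0) :
    qfun p a b s / p s = qPrimitive p a b s / s := by
  rw [qfun_eq, div_mul_eq_mul_div, div_div, mul_comm s, mul_div_mul_left _ _ hp]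

section

variable {p : ℝ → ℝ} {a b : ℝ} (ha : 0 ≤ a) (hb : 0 ≤ b) (hpa : AntitoneOn p (Icc 0 1))
  (hppos : ∀ M ∈ Ico (0:ℝ) 1, 0 < p M)
include ha hb hpa hppos

lemma qIntegrand_monotoneOn : MonotoneOn (qIntegrand p a b) (Ico 0 1) := by
  intro s hs t ht hst
  have hpt : 0 < p t := hppos t ht
  have hpts : p t ≤ p s := hpa (Ico_subset_Icc_self hs) (Ico_subset_Icc_self ht) hst
  have h1t : 0 < 1 - t := by linarith [ht.2]
  unfold qIntegrand
  exact div_le_div₀ (rpow_nonneg (hs.1.trans hst) a) (rpow_le_rpow hs.1 hst ha) (by positivity)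
    (mul_le_mul (rpow_le_rpow h1t.le (by linarith) hb) (pow_le_pow_left₀ hpt.le hpts 2)
      (by positivity) (rpow_nonneg (by linarith [hs.2]) b))

lemma qIntegrand_intervalIntegrable {x y : ℝ} (hx : x ∈ Ico (0:ℝ) 1) (hy : y ∈ Ico (0:ℝ) 1) :
    IntervalIntegrable (qIntegrand p a b) volume x y :=
  ((qIntegrand_monotoneOn ha hb hpa hppos).mono
    (ordConnected_Ico.uIcc_subset hx hy)).intervalIntegrable

lemma qPrimitive_le_mul_qIntegrand {s : ℝ} (hs : s ∈ Ico (0:ℝ) 1) :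
    qPrimitive p a b s ≤ s * qIntegrand p a b s := by
  have h0 : (0:ℝ) ∈ Ico (0:ℝ) 1 := ⟨le_rfl, one_pos⟩
  have := (qIntegrand_monotoneOn ha hb hpa hppos).mul_sub_le_intervalIntegral hs
    (uIoo_subset_uIcc_self.trans (ordConnected_Ico.uIcc_subset hs h0))
    (qIntegrand_intervalIntegrable ha hb hpa hppos hs h0)
  rw [intervalIntegral.integral_symm] at this
  rw [qPrimitive]
  linarith

lemma mul_qIntegrand_le_qPrimitive_sub {s t : ℝ} (hs : s ∈ Ico (0:ℝ) 1)
    (ht : t ∈ Ico (0:ℝ) 1) :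
    qIntegrand p a b s * (t - s) ≤ qPrimitive p a b t - qPrimitive p a b s := by
  have h0 : (0:ℝ) ∈ Ico (0:ℝ) 1 := ⟨le_rfl, one_pos⟩
  rw [qPrimitive, qPrimitive, intervalIntegral.integral_interval_sub_left
    (qIntegrand_intervalIntegrable ha hb hpa hppos h0 ht)
    (qIntegrand_intervalIntegrable ha hb hpa hppos h0 hs)]
  exact (qIntegrand_monotoneOn ha hb hpa hppos).mul_sub_le_intervalIntegral hs
    (uIoo_subset_uIcc_self.trans (ordConnected_Ico.uIcc_subset hs ht))
    (qIntegrand_intervalIntegrable ha hb hpa hppos hs ht)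

lemma rpow_div_le_qPrimitive {s : ℝ} (hs : s ∈ Ico (0:ℝ) 1) :
    s ^ (a + 1) / ((a + 1) * p 0 ^ 2) ≤ qPrimitive p a b s := by
  have h0 : (0:ℝ) ∈ Ico (0:ℝ) 1 := ⟨le_rfl, one_pos⟩
  have hp0 : 0 < p 0 := hppos 0 h0
  have hle : ∀ x ∈ Icc 0 s, x ^ a / p 0 ^ 2 ≤ qIntegrand p a b x := by
    intro x hx
    have hx1 : x ∈ Ico (0:ℝ) 1 := ⟨hx.1, hx.2.trans_lt hs.2⟩
    have hpx : 0 < p x := hppos x hx1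
    have hpxp0 : p x ≤ p 0 := hpa (Ico_subset_Icc_self h0) (Ico_subset_Icc_self hx1) hx.1
    have hb1 : (1 - x) ^ b ≤ 1 := rpow_le_one (by linarith [hx1.2]) (by linarith [hx.1]) hb
    have hb0 : 0 < (1 - x) ^ b := rpow_pos_of_pos (by linarith [hx1.2]) b
    unfold qIntegrand
    refine div_le_div_of_nonneg_left (rpow_nonneg hx.1 a) (by positivity) ?_
    calc (1 - x) ^ b * p x ^ 2 ≤ 1 * p 0 ^ 2 := by gcongr
      _ = p 0 ^ 2 := one_mul _
  have := intervalIntegral.integral_mono_on hs.1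
    ((intervalIntegral.intervalIntegrable_rpow' (by linarith)).div_const _)
    (qIntegrand_intervalIntegrable ha hb hpa hppos h0 hs) hle
  rwa [intervalIntegral.integral_div, integral_rpow (Or.inl (by linarith)),
    zero_rpow (by linarith), sub_zero, div_div] at this

lemma qPrimitive_pos {s : ℝ} (hs : s ∈ Ioo (0:ℝ) 1) : 0 < qPrimitive p a b s :=
  lt_of_lt_of_le
    (by have := hppos 0 ⟨le_rfl, one_pos⟩; have := rpow_pos_of_pos hs.1 (a + 1); positivity)
    (rpow_div_le_qPrimitive ha hb hpa hppos (Ioo_subset_Ico_self hs))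

lemma qfun_pos {s : ℝ} (hs : s ∈ Ioo (0:ℝ) 1) : 0 < qfun p a b s := by
  rw [qfun_eq]
  exact mul_pos (div_pos (hppos s (Ioo_subset_Ico_self hs)) hs.1)
    (qPrimitive_pos ha hb hpa hppos hs)

lemma qfun_div_monotoneOn : MonotoneOn (fun s => qfun p a b s / p s) (Ioo 0 1) := by
  intro s hs t ht hst
  have hFs := qPrimitive_le_mul_qIntegrand ha hb hpa hppos (Ioo_subset_Ico_self hs)
  have hFt := mul_qIntegrand_le_qPrimitive_sub ha hb hpa hppos (Ioo_subset_Ico_self hs)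
    (Ioo_subset_Ico_self ht)
  dsimp only
  rw [qfun_div_eq (hppos s (Ioo_subset_Ico_self hs)).ne',
    qfun_div_eq (hppos t (Ioo_subset_Ico_self ht)).ne',
    div_le_div_iff₀ hs.1 (hs.1.trans_le hst)]
  nlinarith [mul_nonneg (sub_nonneg.2 hst) (sub_nonneg.2 hFs),
    mul_le_mul_of_nonneg_left hFt hs.1.le]

lemma qfun_div_pos {s : ℝ} (hs : s ∈ Ioo (0:ℝ) 1) : 0 < qfun p a b s / p s :=
  div_pos (qfun_pos ha hb hpa hppos hs) (hppos s (Ioo_subset_Ico_self hs))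

lemma log_qfun_div_monotoneOn : MonotoneOn (fun s => log (qfun p a b s / p s)) (Ioo 0 1) :=
  fun _s hs _t _ht hst => log_le_log (qfun_div_pos ha hb hpa hppos hs)
    (qfun_div_monotoneOn ha hb hpa hppos hs _ht hst)

lemma mul_log_sub_log_le_log_qfun_div {s : ℝ} (hs : s ∈ Ioo (0:ℝ) 1) :
    a * log s - log ((a + 1) * p 0 ^ 2) ≤ log (qfun p a b s / p s) := by
  have hc : 0 < (a + 1) * p 0 ^ 2 := by have := hppos 0 ⟨le_rfl, one_pos⟩; positivity
  have hsa : 0 < s ^ a := rpow_pos_of_pos hs.1 a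
  have hle : s ^ a / ((a + 1) * p 0 ^ 2) ≤ qfun p a b s / p s := by
    rw [qfun_div_eq (hppos s (Ioo_subset_Ico_self hs)).ne', le_div_iff₀ hs.1,
      div_mul_eq_mul_div, ← rpow_add_one hs.1.ne']
    exact rpow_div_le_qPrimitive ha hb hpa hppos (Ioo_subset_Ico_self hs)
  rw [← log_rpow hs.1, ← log_div hsa.ne' hc.ne']
  exact log_le_log (div_pos hsa hc) hle

lemma log_qfun_div_intervalIntegrable {x y : ℝ} (hx : x ∈ Ico (0:ℝ) 1)
    (hy : y ∈ Ico (0:ℝ) 1) :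
    IntervalIntegrable (fun s => log (qfun p a b s / p s)) volume x y := by
  have hc : 0 ≤ max x y := le_max_of_le_left hx.1
  have hIoc : Ioc 0 (max x y) ⊆ Ioo 0 1 := fun t ht =>
    ⟨ht.1, ht.2.trans_lt (max_lt hx.2 hy.2)⟩
  have hint : IntegrableOn (fun s => log (qfun p a b s / p s)) (Ioc 0 (max x y)) :=
    ((log_qfun_div_monotoneOn ha hb hpa hppos).mono hIoc).integrableOn_Ioc_of_le
      ((intervalIntegrable_iff_integrableOn_Ioc_of_le hc).1
        ((intervalIntegral.intervalIntegrable_log'.const_mul a).sub intervalIntegrable_const))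
      fun t ht => mul_log_sub_log_le_log_qfun_div ha hb hpa hppos (hIoc ht)
  rw [intervalIntegrable_iff]
  exact hint.mono_set (Ioc_subset_Ioc_left (le_min hx.1 hy.1))

lemma hstar_nonneg {n : ℕ} (hn : 0 < n) {uD w : Fin n → ℝ} (huD : ∀ i, 0 < uD i)
    (hMD : ∑ i, uD i < 1) (hw : ∀ i, 0 ≤ w i) (hM : ∑ i, w i < 1) : 0 ≤ hstar p a b uD w := by
  have hMD0 : 0 < ∑ i, uD i := Finset.sum_pos (fun i _ => huD i) ⟨⟨0, hn⟩, Finset.mem_univ _⟩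
  have hMD' : ∑ i, uD i ∈ Ioo (0:ℝ) 1 := ⟨hMD0, hMD⟩
  have hM' : ∑ i, w i ∈ Ico (0:ℝ) 1 := ⟨Finset.sum_nonneg fun i _ => hw i, hM⟩
  have hlinear : ∑ i, log (uD i * qfun p a b (∑ j, uD j) / p (∑ j, uD j)) * (w i - uD i) =
      ∑ i, log (uD i) * (w i - uD i) +
        log (qfun p a b (∑ j, uD j) / p (∑ j, uD j)) * (∑ i, w i - ∑ i, uD i) := by
    simp only [mul_div_assoc, log_mul (huD _).ne' (qfun_div_pos ha hb hpa hppos hMD').ne',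
      add_mul, Finset.sum_add_distrib, ← Finset.mul_sum, Finset.sum_sub_distrib]
  have hentropy : ∑ i, (uD i * (log (uD i) - 1) + 1) + ∑ i, log (uD i) * (w i - uD i) ≤
      ∑ i, (w i * (log (w i) - 1) + 1) := by
    rw [← Finset.sum_add_distrib]
    exact Finset.sum_le_sum fun i _ => by
      linarith [mul_log_sub_one_add_log_mul_sub_le (hw i) (huD i)]
  have hmixing := (log_qfun_div_monotoneOn ha hb hpa hppos).mul_sub_le_intervalIntegral hMD'
    (uIoo_subset_Ioo ⟨hMD0.le, hMD.le⟩ ⟨hM'.1, hM.le⟩)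
    (log_qfun_div_intervalIntegrable ha hb hpa hppos (Ioo_subset_Ico_self hMD') hM')
  rw [← intervalIntegral.integral_interval_sub_left
    (log_qfun_div_intervalIntegrable ha hb hpa hppos ⟨le_rfl, one_pos⟩ hM')
    (log_qfun_div_intervalIntegrable ha hb hpa hppos ⟨le_rfl, one_pos⟩
      (Ioo_subset_Ico_self hMD'))] at hmixing
  rw [hstar, hent, hent, hlinear]
  linarith

lemma vfun_nonneg {n : ℕ} {w : Fin n → ℝ} (hw : ∀ i, 0 ≤ w i) (hM : ∑ i, w i < 1)
    (i : Fin n) : 0 ≤ vfun p a b w i := by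
  unfold vfun
  split_ifs with h0
  · exact le_rfl
  · rw [mul_div_assoc]
    exact mul_nonneg (hw i) (qfun_div_pos ha hb hpa hppos
      ⟨(Finset.sum_nonneg fun j _ => hw j).lt_of_ne' h0, hM⟩).le

lemma vfun_le {n : ℕ} {w : Fin n → ℝ} {Mstar : ℝ} (hw : ∀ i, 0 ≤ w i) (hM : ∑ i, w i ≤ Mstar)
    (hMstar : Mstar ∈ Ioo (0:ℝ) 1) (i : Fin n) :
    vfun p a b w i ≤ qfun p a b Mstar / p Mstar := by
  have hV := qfun_div_pos ha hb hpa hppos hMstar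
  unfold vfun
  split_ifs with h0
  · exact hV.le
  have hM0 : 0 < ∑ j, w j := (Finset.sum_nonneg fun j _ => hw j).lt_of_ne' h0
  have hM' : ∑ j, w j ∈ Ioo (0:ℝ) 1 := ⟨hM0, hM.trans_lt hMstar.2⟩
  have hwi : w i ≤ 1 := (Finset.single_le_sum (fun j _ => hw j) (Finset.mem_univ i)).trans
    (hM.trans hMstar.2.le)
  rw [mul_div_assoc]
  calc w i * (qfun p a b (∑ j, w j) / p (∑ j, w j))
      ≤ 1 * (qfun p a b (∑ j, w j) / p (∑ j, w j)) :=
        mul_le_mul_of_nonneg_right hwi (qfun_div_pos ha hb hpa hppos hM').le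
    _ ≤ qfun p a b Mstar / p Mstar := by
        rw [one_mul]; exact qfun_div_monotoneOn ha hb hpa hppos hM' hMstar hM

lemma Hent_nonneg {n : ℕ} (hn : 0 < n) {T : Type} [Fintype T] {m : T → ℝ} {uD : Fin n → ℝ}
    {w : T → Fin n → ℝ} (hm : ∀ K, 0 ≤ m K) (huD : ∀ i, 0 < uD i) (hMD : ∑ i, uD i < 1)
    (hw : ∀ K i, 0 ≤ w K i) (hM : ∀ K, ∑ i, w K i < 1) : 0 ≤ Hent p a b m uD w :=
  Finset.sum_nonneg fun K _ =>
    mul_nonneg (hm K) (hstar_nonneg ha hb hpa hppos hn huD hMD (hw K) (hM K))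

end

lemma le_pEdgeSq {p : ℝ → ℝ} {T E : Type} (ends : EdgeEnds T E) {Mf : T → ℝ} {MD c : ℝ}
    (h : ∀ K, c ≤ p (Mf K) ^ 2) (hD : c ≤ p MD ^ 2) (σ : E) : c ≤ pEdgeSq p ends Mf MD σ := by
  unfold pEdgeSq
  rcases ends σ with K | ⟨K, L⟩
  · linarith [h K]
  · linarith [h K, h L]

lemma sq_edgeDiff_le {T E : Type} (ends : EdgeEnds T E) {w : T → ℝ} {wD V : ℝ}
    (hw : ∀ K, w K ∈ Icc 0 V) (hwD : wD ∈ Icc 0 V) (σ : E) :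
    edgeDiff ends w wD σ ^ 2 ≤ 4 * V * edgeDiff ends (fun K => √(w K)) √wD σ ^ 2 := by
  unfold edgeDiff
  rcases ends σ with K | ⟨K, L⟩
  · exact sq_sub_le_four_mul_sq_sqrt_sub hwD.1 (hw K).1 hwD.2 (hw K).2
  · exact sq_sub_le_four_mul_sq_sqrt_sub (hw L).1 (hw K).1 (hw L).2 (hw K).2

lemma Iprod_nonneg {p : ℝ → ℝ} {a b : ℝ} {n : ℕ} {T E : Type} [Fintype T] [Fintype E]
    (ends : EdgeEnds T E) {τ : E → ℝ} (hτ : ∀ σ, 0 ≤ τ σ) (uD : Fin n → ℝ) (w : T → Fin n → ℝ)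
    (i : Fin n) : 0 ≤ Iprod p a b ends τ uD w i :=
  Finset.sum_nonneg fun σ _ => mul_nonneg (mul_nonneg (hτ σ)
    (le_pEdgeSq ends (fun _ => sq_nonneg _) (sq_nonneg _) σ)) (sq_nonneg _)

lemma sum_sq_edgeDiff_vfun_le_Iprod {p : ℝ → ℝ} {a b : ℝ} (ha : 0 ≤ a) (hb : 0 ≤ b)
    (hpa : AntitoneOn p (Icc 0 1)) (hppos : ∀ M ∈ Ico (0:ℝ) 1, 0 < p M) {n : ℕ} {T E : Type}
    [Fintype T] [Fintype E] (ends : EdgeEnds T E) {τ : E → ℝ} (hτ : ∀ σ, 0 ≤ τ σ)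
    {uD : Fin n → ℝ} {w : T → Fin n → ℝ} {Mstar : ℝ} (hMstar : Mstar ∈ Ioo (0:ℝ) 1)
    (huD : ∀ i, 0 ≤ uD i) (hMD : ∑ i, uD i ≤ Mstar)
    (hw : ∀ K i, 0 ≤ w K i) (hM : ∀ K, ∑ i, w K i ≤ Mstar) (i : Fin n) :
    ∑ σ, τ σ * edgeDiff ends (fun K => vfun p a b (w K) i) (vfun p a b uD i) σ ^ 2 ≤
      4 * qfun p a b Mstar / p Mstar ^ 3 * Iprod p a b ends τ uD w i := by
  have hpM : 0 < p Mstar := hppos Mstar (Ioo_subset_Ico_self hMstar)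
  have hconst : 4 * qfun p a b Mstar / p Mstar ^ 3 =
      4 * (qfun p a b Mstar / p Mstar) / p Mstar ^ 2 := by
    field_simp
  have hV : 0 ≤ qfun p a b Mstar / p Mstar := (qfun_div_pos ha hb hpa hppos hMstar).le
  set V := qfun p a b Mstar / p Mstar
  have hp : ∀ M ∈ Icc 0 Mstar, p Mstar ^ 2 ≤ p M ^ 2 := fun M hM =>
    pow_le_pow_left₀ hpM.le (hpa ⟨hM.1, hM.2.trans hMstar.2.le⟩
      (Ioo_subset_Icc_self hMstar) hM.2) 2
  have hv : ∀ {u : Fin n → ℝ}, (∀ i, 0 ≤ u i) → ∑ i, u i ≤ Mstar → vfun p a b u i ∈ Icc 0 V :=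
    fun hu hMu => ⟨vfun_nonneg ha hb hpa hppos hu (hMu.trans_lt hMstar.2) i,
      vfun_le ha hb hpa hppos hu hMu hMstar i⟩
  rw [hconst, Iprod, Finset.mul_sum]
  refine Finset.sum_le_sum fun σ _ => ?_
  have hpσ := le_pEdgeSq ends (fun K => hp _ ⟨Finset.sum_nonneg fun j _ => hw K j, hM K⟩)
    (hp _ ⟨Finset.sum_nonneg fun j _ => huD j, hMD⟩) σ
  have hσ := sq_edgeDiff_le ends (fun K => hv (hw K) (hM K)) (hv huD hMD) σ
  calc τ σ * edgeDiff ends (fun K => vfun p a b (w K) i) (vfun p a b uD i) σ ^ 2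
      ≤ τ σ * (4 * V *
          edgeDiff ends (fun K => √(vfun p a b (w K) i)) √(vfun p a b uD i) σ ^ 2) :=
        mul_le_mul_of_nonneg_left hσ (hτ σ)
    _ = 4 * V / p Mstar ^ 2 * (τ σ * p Mstar ^ 2 *
          edgeDiff ends (fun K => √(vfun p a b (w K) i)) √(vfun p a b uD i) σ ^ 2) := by
        field_simp
    _ ≤ _ := by
        gcongr
        exact hτ σ

theorem scheme_gradient_estimate_general (n : ℕ) (hn : 1 ≤ n) (a b : ℝ)
    (ha : 1 ≤ a) (hb : 1 ≤ b)
    (p : ℝ → ℝ) (hpa : AntitoneOn p (Icc 0 1))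
    (hppos : ∀ M ∈ Ico (0:ℝ) 1, 0 < p M)
    (T E : Type) [Fintype T] [Fintype E] [DecidableEq T]
    (ends : EdgeEnds T E)
    (m : T → ℝ) (hm : ∀ K, 0 < m K) (τ : E → ℝ) (hτ : ∀ σ, 0 < τ σ)
    (uD : Fin n → ℝ) (huD : ∀ i, 0 < uD i)
    (Δt : ℝ) (hΔt : 0 < Δt)
    (Mstar : ℝ) (hMstar : Mstar ∈ Ioo (0:ℝ) 1)
    (hMDstar : ∑ i, uD i ≤ Mstar)
    (N : ℕ) (u : ℕ → T → Fin n → ℝ)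
    (hu0 : ∀ K i, 0 ≤ u 0 K i)
    (hstep : ∀ k ∈ Finset.Icc 1 N, SchemeStep p a b n ends m τ uD Δt (u (k - 1)) (u k))
    (huM : ∀ k ∈ Finset.Icc 0 N, ∀ K, ∑ i, u k K i ≤ Mstar)
    (hedi : ∀ k ∈ Finset.Icc 1 N,
      Hent p a b m uD (u k) + Δt * ∑ i, Iprod p a b ends τ uD (u k) i ≤
        Hent p a b m uD (u (k - 1))) :
    ∀ i : Fin n,
      ∑ k ∈ Finset.Icc 1 N, Δt * ∑ σ : E, τ σ *
          (edgeDiff ends (fun K => vfun p a b (u k K) i) (vfun p a b uD i) σ) ^ 2 ≤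
        4 * qfun p a b Mstar * Hent p a b m uD (u 0) / p Mstar ^ 3 := by
  intro i
  have ha0 : 0 ≤ a := zero_le_one.trans ha
  have hb0 : 0 ≤ b := zero_le_one.trans hb
  have hu : ∀ k ≤ N, ∀ K j, 0 ≤ u k K j := by
    rintro (_ | k) hk
    · exact hu0
    · exact (hstep (k + 1) (Finset.mem_Icc.2 ⟨k.succ_pos, hk⟩)).1
  have hM : ∀ k ≤ N, ∀ K, ∑ j, u k K j ≤ Mstar := fun k hk =>
    huM k (Finset.mem_Icc.2 ⟨k.zero_le, hk⟩)
  set C := 4 * qfun p a b Mstar / p Mstar ^ 3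
  have hC : 0 ≤ C := by
    have := qfun_pos ha0 hb0 hpa hppos hMstar
    have := hppos Mstar (Ioo_subset_Ico_self hMstar)
    positivity
  have hgradient : ∀ k ∈ Finset.Icc 1 N, ∑ σ, τ σ *
      edgeDiff ends (fun K => vfun p a b (u k K) i) (vfun p a b uD i) σ ^ 2 ≤
        C * ∑ j, Iprod p a b ends τ uD (u k) j := fun k hk =>
    have hkN := (Finset.mem_Icc.1 hk).2
    (sum_sq_edgeDiff_vfun_le_Iprod ha0 hb0 hpa hppos ends (fun σ => (hτ σ).le) hMstar
      (fun j => (huD j).le) hMDstar (hu k hkN) (hM k hkN) i).trans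
    (mul_le_mul_of_nonneg_left (Finset.single_le_sum
      (fun j _ => Iprod_nonneg ends (fun σ => (hτ σ).le) uD (u k) j) (Finset.mem_univ i)) hC)
  have hHN : 0 ≤ Hent p a b m uD (u N) :=
    Hent_nonneg ha0 hb0 hpa hppos hn (fun K => (hm K).le) huD (hMDstar.trans_lt hMstar.2)
      (hu N le_rfl) fun K => (hM N le_rfl K).trans_lt hMstar.2
  calc _ ≤ ∑ k ∈ Finset.Icc 1 N, Δt * (C * ∑ j, Iprod p a b ends τ uD (u k) j) :=
        Finset.sum_le_sum fun k hk => mul_le_mul_of_nonneg_left (hgradient k hk) hΔt.le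
    _ = C * ∑ k ∈ Finset.Icc 1 N, Δt * ∑ j, Iprod p a b ends τ uD (u k) j := by
        rw [Finset.mul_sum]
        exact Finset.sum_congr rfl fun k _ => mul_left_comm _ _ _
    _ ≤ C * Hent p a b m uD (u 0) := by
        have := sum_Icc_le_sub_of_add_le hedi
        gcongr
        linarith
    _ = 4 * qfun p a b Mstar * Hent p a b m uD (u 0) / p Mstar ^ 3 := by
        rw [mul_div_right_comm]

/-- Discrete gradient estimate: if `u⁰,…,u^N` are successive solutions of the
implicit Euler finite-volume scheme with total biomass bounded by `M* ∈ (0,1)`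
(`M^D ≤ M*`), each step satisfying the entropy inequality, then for every `i`:
`Σ_{k=1}^N Δt Σ_σ τ_σ (D_σ vᵢ(u^k))² ≤ 4 q(M*) H(u⁰) / p(M*)³`. -/
theorem scheme_gradient_estimate (n : ℕ) (hn : 1 ≤ n) (a b : ℝ)
    (ha : 1 ≤ a) (hb : 1 ≤ b)
    (p : ℝ → ℝ) (hpc : ContinuousOn p (Icc 0 1))
    (hpa : AntitoneOn p (Icc 0 1)) (hp1 : p 1 = 0)
    (hppos : ∀ M ∈ Ico (0:ℝ) 1, 0 < p M)
    (T E : Type) [Fintype T] [Fintype E] [DecidableEq T]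
    (ends : EdgeEnds T E)
    (hends : ∀ σ K L, ends σ = Sum.inr (K, L) → K ≠ L)
    (m : T → ℝ) (hm : ∀ K, 0 < m K) (τ : E → ℝ) (hτ : ∀ σ, 0 < τ σ)
    (uD : Fin n → ℝ) (huD : ∀ i, 0 < uD i) (hMD : ∑ i, uD i < 1)
    (Δt : ℝ) (hΔt : 0 < Δt)
    (Mstar : ℝ) (hMstar : Mstar ∈ Ioo (0:ℝ) 1)
    (hMDstar : ∑ i, uD i ≤ Mstar)
    (N : ℕ) (hN : 1 ≤ N)
    (u : ℕ → T → Fin n → ℝ)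
    (hu0 : ∀ K i, 0 ≤ u 0 K i)
    (hstep : ∀ k ∈ Finset.Icc 1 N, SchemeStep p a b n ends m τ uD Δt (u (k - 1)) (u k))
    (huM : ∀ k ∈ Finset.Icc 0 N, ∀ K, ∑ i, u k K i ≤ Mstar)
    (hedi : ∀ k ∈ Finset.Icc 1 N,
      Hent p a b m uD (u k) + Δt * ∑ i, Iprod p a b ends τ uD (u k) i ≤
        Hent p a b m uD (u (k - 1))) :
    ∀ i : Fin n,
      ∑ k ∈ Finset.Icc 1 N, Δt * ∑ σ : E, τ σ *
          (edgeDiff ends (fun K => vfun p a b (u k K) i) (vfun p a b uD i) σ) ^ 2 ≤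
        4 * qfun p a b Mstar * Hent p a b m uD (u 0) / p Mstar ^ 3 :=
  scheme_gradient_estimate_general n hn a b ha hb p hpa hppos T E ends m hm τ hτ uD huD Δt hΔt Mstar
    hMstar hMDstar N u hu0 hstep huM hedi
end
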